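/- (Proposition 1) Let N ≥ 2 and let Q be an N×N real symmetric positive semidefinite matrix with all row sums zero and all diagonal entries equal to 1/N². Then the largest eigenvalue of Q satisfies λ_max(Q) ≥ 1/(N(N−1)), with equality if and only if Q = Q_strict := (1/(N(N−1))) ( I_N − (1/N) J_N ), where I_N is the N×N identity matrix and J_N is the N×N all-ones matrix. -/

import Mathlib

/-!
Write `c = 1/(N(N−1))` and `𝟙` for the all-ones vector. As `Q𝟙 = 0` and `Q` is symmetric, the
quadratic form of `Q` is unchanged under `v ↦ v − a𝟙`. Testing `λ_max` on `eᵢ − 𝟙/N`, of squared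
norm `(N−1)/N` and `Q`-value `Qᵢᵢ = 1/N²`, gives `λ_max ≥ c`. If `λ_max = c`, subtracting from `v`
its mean gives `v′Qv ≤ c(‖v‖² − (∑ vᵢ)²/N) = v′ Q_strict v`, so `Q_strict − Q` is positive
semidefinite with zero diagonal, hence zero. Conversely `v′ Q_strict v ≤ c` on unit
vectors.
-/

open Finset

/-- The matrix `Q_strict = (1/(N(N−1)))(I_N − (1/N)J_N)`, where `J_N` is the
all-ones matrix. -/
noncomputable def Qstrict (N : ℕ) : Matrix (Fin N) (Fin N) ℝ :=
  (1 / ((N : ℝ) * ((N : ℝ) - 1))) •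
    ((1 : Matrix (Fin N) (Fin N) ℝ) - (N : ℝ)⁻¹ • Matrix.of (fun _ _ => (1 : ℝ)))

open Matrix

section QuadraticForm

variable {n : Type*} [Fintype n]

def rayleighValues (A : Matrix n n ℝ) : Set ℝ :=
  {r | ∃ τ : n → ℝ, ∑ i, τ i ^ 2 = 1 ∧ r = ∑ i, ∑ j, A i j * τ i * τ j}

lemma sum_sq_eq_dotProduct_self (v : n → ℝ) : ∑ i, v i ^ 2 = v ⬝ᵥ v := by
  simp only [dotProduct, sq]

lemma sum_sum_mul_mul_eq_dotProduct_mulVec (A : Matrix n n ℝ) (v : n → ℝ) :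
    ∑ i, ∑ j, A i j * v i * v j = v ⬝ᵥ (A *ᵥ v) := by
  simp only [dotProduct, mulVec, Finset.mul_sum]
  exact Finset.sum_congr rfl fun i _ => Finset.sum_congr rfl fun j _ => by ring

lemma dotProduct_mulVec_le_of_mem_upperBounds {A : Matrix n n ℝ} {lam : ℝ}
    (hlam : lam ∈ upperBounds (rayleighValues A)) (v : n → ℝ) :
    v ⬝ᵥ (A *ᵥ v) ≤ lam * (v ⬝ᵥ v) := by
  rcases eq_or_ne v 0 with rfl | hv
  · simp
  have hpos : 0 < v ⬝ᵥ v := dotProduct_self_star_pos_iff.mpr hv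
  set t := Real.sqrt (v ⬝ᵥ v)
  have ht2 : t ^ 2 = v ⬝ᵥ v := Real.sq_sqrt hpos.le
  have hmem : (t⁻¹ • v) ⬝ᵥ (A *ᵥ (t⁻¹ • v)) ∈ rayleighValues A := by
    refine ⟨t⁻¹ • v, ?_, (sum_sum_mul_mul_eq_dotProduct_mulVec A _).symm⟩
    rw [sum_sq_eq_dotProduct_self, dotProduct_smul, smul_dotProduct, smul_eq_mul, smul_eq_mul,
      ← mul_assoc, ← sq, inv_pow, ht2, inv_mul_cancel₀ hpos.ne']
  have hle := hlam hmem
  rw [mulVec_smul, dotProduct_smul, smul_dotProduct, smul_eq_mul, smul_eq_mul, ← mul_assoc,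
    ← sq, inv_pow, ht2, inv_mul_le_iff₀ hpos] at hle
  linarith

lemma dotProduct_mulVec_sub_smul_one {R : Type*} [CommRing R] {A : Matrix n n R}
    (hrow : A *ᵥ 1 = 0) (hcol : 1 ᵥ* A = 0) (v : n → R) (a : R) :
    (v - a • 1) ⬝ᵥ (A *ᵥ (v - a • 1)) = v ⬝ᵥ (A *ᵥ v) := by
  rw [mulVec_sub, mulVec_smul, hrow, smul_zero, sub_zero, sub_dotProduct, smul_dotProduct,
    dotProduct_mulVec 1, hcol, zero_dotProduct, smul_zero, sub_zero]

lemma dotProduct_self_sub_mean [Nonempty n] (v : n → ℝ) :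
    (v - ((∑ i, v i) / Fintype.card n) • 1) ⬝ᵥ (v - ((∑ i, v i) / Fintype.card n) • 1) =
      v ⬝ᵥ v - (∑ i, v i) ^ 2 / Fintype.card n := by
  have hcard : (Fintype.card n : ℝ) ≠ 0 := Nat.cast_ne_zero.mpr Fintype.card_ne_zero
  simp only [sub_dotProduct, dotProduct_sub, smul_dotProduct, dotProduct_smul]
  rw [one_dotProduct_one]
  simp only [dotProduct_one, one_dotProduct, smul_eq_mul]
  field_simp
  ring

lemma diag_le_mul_one_sub_inv_card [DecidableEq n] {A : Matrix n n ℝ} (hrow : A *ᵥ 1 = 0)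
    (hcol : 1 ᵥ* A = 0) {lam : ℝ} (hlam : ∀ v, v ⬝ᵥ (A *ᵥ v) ≤ lam * (v ⬝ᵥ v)) (i : n) :
    A i i ≤ lam * (1 - (Fintype.card n : ℝ)⁻¹) := by
  have : Nonempty n := ⟨i⟩
  have hle := hlam (Pi.single i 1 - ((∑ j, Pi.single i (1 : ℝ) j) / Fintype.card n) • 1)
  rw [dotProduct_mulVec_sub_smul_one hrow hcol, dotProduct_self_sub_mean, mulVec_single_one,
    single_dotProduct, single_dotProduct, Finset.sum_pi_single'] at hle
  simp only [col_apply, Pi.single_eq_same, one_mul, Finset.mem_univ, if_true, one_pow] at hle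
  rwa [one_div] at hle

open scoped ComplexOrder in
lemma eq_of_posSemidef_sub_of_diag_eq {𝕜 : Type*} [RCLike 𝕜] {A B : Matrix n n 𝕜}
    (h : (B - A).PosSemidef) (hdiag : ∀ i, A i i = B i i) : A = B := by
  have htrace : (B - A).trace = 0 := by simp [trace, hdiag]
  exact (sub_eq_zero.mp (h.trace_eq_zero_iff.mp htrace)).symm

end QuadraticForm

section Qstrict

variable {N : ℕ}

lemma isHermitian_Qstrict : (Qstrict N).IsHermitian :=
  IsHermitian.ext fun i j => by simp [Qstrict, one_apply, eq_comm]

lemma Qstrict_apply_self (hN : 2 ≤ N) (i : Fin N) : Qstrict N i i = 1 / (N : ℝ) ^ 2 := by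
  have hN' : (2 : ℝ) ≤ N := by exact_mod_cast hN
  have h0 : (N : ℝ) ≠ 0 := by positivity
  have h1 : (N : ℝ) - 1 ≠ 0 := by linarith
  simp only [Qstrict, Matrix.smul_apply, Matrix.sub_apply, one_apply_eq, of_apply, smul_eq_mul,
    mul_one]
  field_simp

lemma dotProduct_mulVec_Qstrict (v : Fin N → ℝ) :
    v ⬝ᵥ (Qstrict N *ᵥ v) = 1 / ((N : ℝ) * ((N : ℝ) - 1)) * (v ⬝ᵥ v - (∑ i, v i) ^ 2 / N) := by
  have hJ : of (fun _ _ => (1 : ℝ)) *ᵥ v = (∑ i, v i) • (1 : Fin N → ℝ) := by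
    ext; simp [mulVec, dotProduct]
  rw [Qstrict, smul_mulVec, sub_mulVec, one_mulVec, smul_mulVec, hJ]
  simp only [dotProduct_smul, dotProduct_sub, dotProduct_one, smul_eq_mul]
  ring

lemma one_div_mul_sub_one_nonneg : 0 ≤ 1 / ((N : ℝ) * ((N : ℝ) - 1)) := by
  rcases N with _ | N
  · simp
  · push_cast
    rw [add_sub_cancel_right]
    positivity

lemma one_div_mul_sub_one_le_of_diag_eq {A : Matrix (Fin N) (Fin N) ℝ} (hN : 2 ≤ N)
    (hrow : A *ᵥ 1 = 0) (hcol : 1 ᵥ* A = 0) (hdiag : ∀ i, A i i = 1 / (N : ℝ) ^ 2) {lam : ℝ}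
    (hlam : ∀ v, v ⬝ᵥ (A *ᵥ v) ≤ lam * (v ⬝ᵥ v)) :
    1 / ((N : ℝ) * ((N : ℝ) - 1)) ≤ lam := by
  have hN' : (2 : ℝ) ≤ N := by exact_mod_cast hN
  have hle := diag_le_mul_one_sub_inv_card hrow hcol hlam ⟨0, by omega⟩
  rw [hdiag, Fintype.card_fin] at hle
  have hN0 : (N : ℝ) ≠ 0 := by positivity
  have hscale : lam * (N * (N - 1)) = N ^ 2 * (lam * (1 - (N : ℝ)⁻¹)) := by
    field_simp
  rw [div_le_iff₀ (by nlinarith), hscale]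
  exact (div_le_iff₀' (by positivity)).mp hle

lemma le_of_mem_rayleighValues_Qstrict {r : ℝ} (hr : r ∈ rayleighValues (Qstrict N)) :
    r ≤ 1 / ((N : ℝ) * ((N : ℝ) - 1)) := by
  obtain ⟨τ, hτ, rfl⟩ := hr
  rw [sum_sum_mul_mul_eq_dotProduct_mulVec, dotProduct_mulVec_Qstrict,
    ← sum_sq_eq_dotProduct_self, hτ]
  have : 0 ≤ (∑ i, τ i) ^ 2 / N := by positivity
  nlinarith [one_div_mul_sub_one_nonneg (N := N)]

lemma eq_Qstrict_of_diag_eq {A : Matrix (Fin N) (Fin N) ℝ} (hN : 2 ≤ N) (hA : A.IsHermitian)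
    (hrow : A *ᵥ 1 = 0) (hcol : 1 ᵥ* A = 0) (hdiag : ∀ i, A i i = 1 / (N : ℝ) ^ 2)
    (hlam : ∀ v, v ⬝ᵥ (A *ᵥ v) ≤ 1 / ((N : ℝ) * ((N : ℝ) - 1)) * (v ⬝ᵥ v)) :
    A = Qstrict N := by
  have : NeZero N := ⟨by omega⟩
  refine eq_of_posSemidef_sub_of_diag_eq ?_ fun i => by rw [hdiag, Qstrict_apply_self hN]
  refine .of_dotProduct_mulVec_nonneg (isHermitian_Qstrict.sub hA) fun v => ?_
  have hcentre := hlam (v - ((∑ i, v i) / Fintype.card (Fin N)) • 1)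
  rw [dotProduct_mulVec_sub_smul_one hrow hcol, dotProduct_self_sub_mean, Fintype.card_fin,
    ← dotProduct_mulVec_Qstrict] at hcentre
  rw [star_trivial, sub_mulVec, dotProduct_sub]
  linarith

end Qstrict

/-- Proposition 1: for any `N×N` real symmetric positive semidefinite matrix
`Q` with all row sums zero and all diagonal entries `1/N²`, the largest
eigenvalue `λ_max(Q)` (the maximum of `τ′Qτ` over unit vectors `τ`) satisfies
`λ_max(Q) ≥ 1/(N(N−1))`, with equality if and only if `Q = Q_strict`. -/
theorem proposition1 {N : ℕ} (hN : 2 ≤ N)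
    (Q : Matrix (Fin N) (Fin N) ℝ) (hQ : Q.PosSemidef)
    (hrow : ∀ i, ∑ j, Q i j = 0) (hdiag : ∀ i, Q i i = 1 / (N : ℝ) ^ 2)
    (lamMax : ℝ)
    (hlam : IsGreatest
      {r : ℝ | ∃ τ : Fin N → ℝ, ∑ i, (τ i) ^ 2 = 1 ∧
        r = ∑ i, ∑ j, Q i j * τ i * τ j} lamMax) :
    1 / ((N : ℝ) * ((N : ℝ) - 1)) ≤ lamMax ∧
      (lamMax = 1 / ((N : ℝ) * ((N : ℝ) - 1)) ↔ Q = Qstrict N) := by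
  have hrow' : Q *ᵥ 1 = 0 := funext fun i => by simpa [mulVec, dotProduct] using hrow i
  have hcol' : 1 ᵥ* Q = 0 := by
    rw [← mulVec_transpose, ← conjTranspose_eq_transpose_of_trivial, hQ.isHermitian.eq, hrow']
  have hform := dotProduct_mulVec_le_of_mem_upperBounds (A := Q) hlam.2
  have hlower := one_div_mul_sub_one_le_of_diag_eq hN hrow' hcol' hdiag hform
  refine ⟨hlower, fun hlamMax => ?_, fun hQstrict => ?_⟩
  · exact eq_Qstrict_of_diag_eq hN hQ.isHermitian hrow' hcol' hdiag (hlamMax ▸ hform)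
  · subst hQstrict
    exact le_antisymm (le_of_mem_rayleighValues_Qstrict hlam.1) hlower
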